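/- Let C ⊆ 2^[n] be a degree two code. A neuron i ∈ [n] is a k-piercing of C if and only if i is an elimination neuron (simplicial in G(C) and minimal in P(C)) with exactly k neighbors in G(C). -/

import Mathlib

open MvPolynomial

noncomputable section

abbrev PM (n : ℕ) := MvPolynomial (Fin n) (ZMod 2)

/-- A pseudo-monomial in `F₂[x₁,…,xₙ]`. -/
def IsPseudoMonomial {n : ℕ} (f : PM n) : Prop :=
  ∃ σ τ : Finset (Fin n), Disjoint σ τ ∧
    f = (∏ i ∈ σ, X i) * ∏ j ∈ τ, (1 - X j)

/-- The indicator pseudo-monomial `ρ_σ`. -/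
def rho {n : ℕ} (σ : Finset (Fin n)) : PM n :=
  (∏ i ∈ σ, X i) * ∏ j ∈ σᶜ, (1 - X j)

/-- The neural ideal of a code. -/
def neuralIdeal {n : ℕ} (C : Set (Finset (Fin n))) : Ideal (PM n) :=
  Ideal.span {f | ∃ σ ∉ C, f = rho σ}

/-- The canonical form: minimal (under divisibility) pseudo-monomials in the neural ideal. -/
def CF {n : ℕ} (C : Set (Finset (Fin n))) : Set (PM n) :=
  {f | IsPseudoMonomial f ∧ f ∈ neuralIdeal C ∧
    ∀ g, IsPseudoMonomial g → g ∈ neuralIdeal C → g ∣ f → g = f}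

/-- Evaluation of a polynomial at a codeword. -/
def evalAt {n : ℕ} (c : Finset (Fin n)) (f : PM n) : ZMod 2 :=
  MvPolynomial.eval (fun i => if i ∈ c then 1 else 0) f

/-- The standing conventions on codes. -/
def GoodCode {n : ℕ} (C : Set (Finset (Fin n))) : Prop :=
  ∅ ∈ C ∧ (∀ i : Fin n, ∃ c ∈ C, i ∈ c) ∧
    ∀ i j : Fin n, i ≠ j → ¬(∀ c ∈ C, i ∈ c ↔ j ∈ c)

/-- The interval `[σ,τ]`. -/
def Icc' {n : ℕ} (σ τ : Finset (Fin n)) : Set (Finset (Fin n)) :=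
  {γ | σ ⊆ γ ∧ γ ⊆ τ}

/-- The deletion of a neuron from a code (keeping the ambient index set). -/
def del {n : ℕ} (C : Set (Finset (Fin n))) (i : Fin n) : Set (Finset (Fin n)) :=
  (fun c => c.erase i) '' C

/-- The deletion of the last neuron, as a code on `Fin n`. -/
def delLast {n : ℕ} (C : Set (Finset (Fin (n + 1)))) : Set (Finset (Fin n)) :=
  {d | ∃ c ∈ C, d.map Fin.castSuccEmb = c.erase (Fin.last n)}

/-- Neuron `i` is a `k`-piercing of `C`. -/
def IsPiercing {n : ℕ} (C : Set (Finset (Fin n))) (i : Fin n) (k : ℕ) : Prop :=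
  ∃ σ τ : Finset (Fin n), σ ⊆ τ ∧ i ∉ τ ∧ (τ \ σ).card = k ∧
    Icc' σ τ ⊆ del C i ∧
    C = del C i ∪ Icc' (insert i σ) (insert i τ)

/-- `C` is `k`-inductively pierced. -/
inductive InductivelyPierced {n : ℕ} (k : ℕ) : Set (Finset (Fin n)) → Prop
  | empty : InductivelyPierced k {∅}
  | pierce (C : Set (Finset (Fin n))) (i : Fin n) (k' : ℕ) (hk : k' ≤ k)
      (hp : IsPiercing C i k') (hrec : InductivelyPierced k (del C i)) :
      InductivelyPierced k C

/-- All elements of the canonical form have degree exactly two. -/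
def DegreeTwo {n : ℕ} (C : Set (Finset (Fin n))) : Prop :=
  ∀ f ∈ CF C, f.totalDegree = 2

/-- The general relationship graph `G(C)` of a degree two code. -/
def GRel {n : ℕ} (C : Set (Finset (Fin n))) : SimpleGraph (Fin n) where
  Adj i j := i ≠ j ∧ ∀ f ∈ CF C, f.vars ≠ {i, j}
  symm := ⟨by
    rintro i j ⟨hne, h⟩
    exact ⟨hne.symm, fun f hf => by rw [Finset.pair_comm]; exact h f hf⟩⟩
  loopless := ⟨fun i h => h.1 rfl⟩

/-- The order relation of `P(C)`: `i < j` iff `xᵢ(1-xⱼ) ∈ CF(J_C)`. -/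
def PLt {n : ℕ} (C : Set (Finset (Fin n))) (i j : Fin n) : Prop :=
  X i * (1 - X j) ∈ CF C

/-- A simplicial vertex: its neighborhood is a clique. -/
def IsSimplicial {V : Type*} (G : SimpleGraph V) (v : V) : Prop :=
  G.IsClique (G.neighborSet v)

/-- A chordal graph: every cycle of length at least four has a chord. -/
def IsChordal {V : Type*} (G : SimpleGraph V) : Prop :=
  ∀ (u : V) (w : G.Walk u u), w.IsCycle → 4 ≤ w.length →
    ∃ a b, G.Adj a b ∧ a ∈ w.support ∧ b ∈ w.support ∧ s(a, b) ∉ w.edges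

/-- The code of a collection of sets. -/
def codeOf {X : Type*} {n : ℕ} (U : Fin n → Set X) : Set (Finset (Fin n)) :=
  {σ | ∃ p, ∀ i, p ∈ U i ↔ i ∈ σ}

/-- `S` is a `k`-dimensional sphere: a sphere of positive radius inside a
`(k+1)`-dimensional affine subspace, centered in that subspace. -/
def IsSubSphere {E : Type*} [NormedAddCommGroup E] [NormedSpace ℝ E] (k : ℕ)
    (S : Set E) : Prop :=
  ∃ (A : AffineSubspace ℝ E) (c : E) (ρ : ℝ), 0 < ρ ∧ c ∈ A ∧
    Module.finrank ℝ A.direction = k + 1 ∧ S = (A : Set E) ∩ Metric.sphere c ρ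

/-- The boundary spheres of the balls `B(xᵢ, rᵢ)` form a well-formed collection in `ℝ^d`. -/
def WellFormedBalls {d n : ℕ} (x : Fin n → EuclideanSpace ℝ (Fin d))
    (r : Fin n → ℝ) : Prop :=
  ∀ F : Finset (Fin n), F.Nonempty →
    (F.card ≤ d →
      (⋂ i ∈ F, Metric.sphere (x i) (r i)) = ∅ ∨
        IsSubSphere (d - F.card) (⋂ i ∈ F, Metric.sphere (x i) (r i))) ∧
    (F.card = d + 1 → (⋂ i ∈ F, Metric.sphere (x i) (r i)) = ∅)

/-- `C` has a well-formed realization by open balls in `ℝ^d`. -/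
def HasWFRealization {n : ℕ} (C : Set (Finset (Fin n))) (d : ℕ) : Prop :=
  ∃ (x : Fin n → EuclideanSpace ℝ (Fin d)) (r : Fin n → ℝ),
    (∀ i, 0 < r i) ∧ WellFormedBalls x r ∧
    codeOf (fun i => Metric.ball (x i) (r i)) = C


lemma evalAt_expr {n : ℕ} (c σ τ : Finset (Fin n)) :
    evalAt c ((∏ i ∈ σ, X i) * ∏ j ∈ τ, (1 - X j)) =
      if σ ⊆ c ∧ ∀ j ∈ τ, j ∉ c then 1 else 0 := by
  unfold evalAt
  rw [map_mul, map_prod, map_prod]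
  simp only [eval_X, map_sub, map_one]
  have h1 : (∏ i ∈ σ, if i ∈ c then (1:ZMod 2) else 0) = if ∀ i ∈ σ, i ∈ c then 1 else 0 := by
    simp [Finset.prod_boole]
  have h2 : (∏ j ∈ τ, ((1:ZMod 2) - if j ∈ c then 1 else 0)) = if ∀ j ∈ τ, j ∉ c then 1 else 0 := by
    have : ∀ j, ((1:ZMod 2) - if j ∈ c then 1 else 0) = if j ∉ c then 1 else 0 := by
      intro j; split_ifs <;> simp_all
    simp only [this, Finset.prod_boole]; congr 1
  rw [h1, h2]
  split_ifs with hA hB hC hD <;> simp_all [Finset.subset_iff]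

lemma evalAt_rho {n : ℕ} (c σ : Finset (Fin n)) :
    evalAt c (rho σ) = if σ = c then 1 else 0 := by
  rw [rho, evalAt_expr]
  congr 1
  simp only [eq_iff_iff, Finset.mem_compl]
  constructor
  · rintro ⟨h1, h2⟩
    apply Finset.Subset.antisymm h1
    intro x hx; by_contra hxs; exact h2 x hxs hx
  · rintro rfl; exact ⟨Finset.Subset.refl _, fun j hj => hj⟩

lemma evalAt_ringHom {n : ℕ} (c : Finset (Fin n)) :
    ∃ φ : PM n →+* ZMod 2, ∀ f, φ f = evalAt c f :=
  ⟨MvPolynomial.eval _, fun _ => rfl⟩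

lemma vanish_of_mem {n : ℕ} {C : Set (Finset (Fin n))} {f : PM n}
    (hf : f ∈ neuralIdeal C) {c : Finset (Fin n)} (hc : c ∈ C) : evalAt c f = 0 := by
  have : neuralIdeal C ≤ RingHom.ker (MvPolynomial.eval (fun i => if i ∈ c then (1:ZMod 2) else 0)) := by
    rw [neuralIdeal, Ideal.span_le]
    rintro g ⟨σ, hσ, rfl⟩
    have : evalAt c (rho σ) = 0 := by
      rw [evalAt_rho]; split_ifs with h
      · exact absurd (h ▸ hc) hσ
      · rfl
    exact this
  exact this hf

lemma mem_of_vanish {n : ℕ} {C : Set (Finset (Fin n))} {σ τ : Finset (Fin n)}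
    (hd : Disjoint σ τ)
    (hv : ∀ c ∈ C, ¬ (σ ⊆ c ∧ ∀ j ∈ τ, j ∉ c)) :
    (∏ i ∈ σ, X i) * ∏ j ∈ τ, (1 - X j) ∈ neuralIdeal C := by
  classical
  set R : Finset (Fin n) := (σ ∪ τ)ᶜ with hR
  have key : (∏ i ∈ σ, X i) * ∏ j ∈ τ, (1 - X j) =
      ∑ ω ∈ R.powerset, rho (σ ∪ ω) := by
    have hrho : ∀ ω ∈ R.powerset, rho (σ ∪ ω) =
        ((∏ i ∈ σ, X i) * ∏ j ∈ τ, (1 - X j)) *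
          ((∏ i ∈ ω, X i) * ∏ j ∈ R \ ω, (1 - X j)) := by
      intro ω hω
      rw [Finset.mem_powerset] at hω
      have hcompl : (σ ∪ ω)ᶜ = τ ∪ (R \ ω) := by
        ext x
        have hωx : x ∈ ω → x ∈ R := fun h => hω h
        have hdx : x ∈ σ → x ∉ τ := fun h => Finset.disjoint_left.mp hd h
        simp only [hR, Finset.mem_compl, Finset.mem_union, Finset.mem_sdiff] at hωx ⊢
        push_neg at hωx
        tauto
      have hdσω : Disjoint σ ω := by
        refine Finset.disjoint_left.mpr fun x hxσ hxω => ?_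
        have := hω hxω
        simp [hR, Finset.mem_compl, Finset.mem_union] at this
        exact this.1 hxσ
      have hdτR : Disjoint τ (R \ ω) := by
        refine Finset.disjoint_left.mpr fun x hxτ hx => ?_
        rw [Finset.mem_sdiff] at hx
        have := hx.1
        simp [hR, Finset.mem_compl, Finset.mem_union] at this
        exact this.2 hxτ
      rw [rho, hcompl, Finset.prod_union hdσω, Finset.prod_union hdτR]
      ring
    rw [Finset.sum_congr rfl hrho, ← Finset.mul_sum]
    have : ∑ ω ∈ R.powerset, ((∏ i ∈ ω, X i) * ∏ j ∈ R \ ω, (1 - X j)) =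
        ∏ j ∈ R, ((X j : PM n) + (1 - X j)) := by
      rw [Finset.prod_add]
    simp only [this]
    simp
  rw [key]
  apply Ideal.sum_mem
  intro ω hω
  rw [Finset.mem_powerset] at hω
  apply Ideal.subset_span
  refine ⟨σ ∪ ω, ?_, rfl⟩
  intro hmem
  refine hv _ hmem ⟨Finset.subset_union_left, fun j hj hjc => ?_⟩
  rcases Finset.mem_union.mp hjc with h | h
  · exact Finset.disjoint_left.mp hd h hj
  · have := hω h
    simp [hR, Finset.mem_compl, Finset.mem_union] at this
    exact this.2 hj

def phi {n : ℕ} : PM n →+* Polynomial (ZMod 2) :=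
  (MvPolynomial.aeval (fun _ : Fin n => Polynomial.X)).toRingHom

lemma phi_expr {n : ℕ} (σ τ : Finset (Fin n)) :
    phi ((∏ i ∈ σ, X i) * ∏ j ∈ τ, (1 - X j)) =
      Polynomial.X ^ σ.card * (1 - Polynomial.X) ^ τ.card := by
  rw [phi]
  simp only [map_mul, map_prod, map_sub, map_one, AlgHom.toRingHom_eq_coe, RingHom.coe_coe,
    aeval_X]
  rw [Finset.prod_const, Finset.prod_const]

lemma one_sub_X_natDegree : (1 - Polynomial.X : Polynomial (ZMod 2)).natDegree = 1 := by
  have : (1 - Polynomial.X : Polynomial (ZMod 2)) = Polynomial.X + Polynomial.C 1 := by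
    rw [sub_eq_add_neg, CharTwo.neg_eq, Polynomial.C_1, add_comm]
  rw [this, Polynomial.natDegree_X_add_C]

lemma one_sub_X_ne_zero : (1 - Polynomial.X : Polynomial (ZMod 2)) ≠ 0 := by
  intro h
  have := congrArg Polynomial.natDegree h
  rw [one_sub_X_natDegree, Polynomial.natDegree_zero] at this
  exact one_ne_zero this

lemma phi_expr_ne_zero {n : ℕ} (σ τ : Finset (Fin n)) :
    phi ((∏ i ∈ σ, X i) * ∏ j ∈ τ, (1 - X j)) ≠ 0 := by
  rw [phi_expr]
  exact mul_ne_zero (pow_ne_zero _ Polynomial.X_ne_zero) (pow_ne_zero _ one_sub_X_ne_zero)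

lemma expr_ne_zero {n : ℕ} (σ τ : Finset (Fin n)) :
    ((∏ i ∈ σ, X i) * ∏ j ∈ τ, (1 - X j) : PM n) ≠ 0 := by
  intro h
  exact phi_expr_ne_zero σ τ (by rw [h, map_zero])

lemma phi_expr_natDegree {n : ℕ} (σ τ : Finset (Fin n)) :
    (phi ((∏ i ∈ σ, X i) * ∏ j ∈ τ, (1 - X j))).natDegree = σ.card + τ.card := by
  rw [phi_expr, Polynomial.natDegree_mul (pow_ne_zero _ Polynomial.X_ne_zero)
    (pow_ne_zero _ one_sub_X_ne_zero), Polynomial.natDegree_pow, Polynomial.natDegree_pow,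
    Polynomial.natDegree_X, one_sub_X_natDegree, mul_one, mul_one]

lemma natDegree_phi_le {n : ℕ} (f : PM n) : (phi f).natDegree ≤ f.totalDegree := by
  conv_lhs => rw [f.as_sum]
  rw [map_sum]
  refine le_trans (Polynomial.natDegree_sum_le_of_forall_le _ _ fun m hm => ?_) le_rfl
  · rw [phi]
    simp only [AlgHom.toRingHom_eq_coe, RingHom.coe_coe, aeval_monomial]
    refine le_trans (Polynomial.natDegree_mul_le) ?_
    have h1 : (algebraMap (ZMod 2) (Polynomial (ZMod 2)) (coeff m f)).natDegree = 0 :=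
      Polynomial.natDegree_C _
    rw [h1, zero_add]
    have h2 : (m.prod fun _ k => (Polynomial.X : Polynomial (ZMod 2)) ^ k) =
        Polynomial.X ^ (m.sum fun _ k => k) := by
      rw [Finsupp.prod, Finsupp.sum, ← Finset.prod_pow_eq_pow_sum]
    rw [h2]
    exact le_trans (Polynomial.natDegree_X_pow_le _) (MvPolynomial.le_totalDegree hm)

lemma totalDegree_expr_le {n : ℕ} (σ τ : Finset (Fin n)) :
    ((∏ i ∈ σ, X i) * ∏ j ∈ τ, (1 - X j) : PM n).totalDegree ≤ σ.card + τ.card := by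
  refine le_trans (MvPolynomial.totalDegree_mul _ _) (add_le_add ?_ ?_)
  · refine le_trans (MvPolynomial.totalDegree_finset_prod _ _) ?_
    refine le_trans (Finset.sum_le_card_nsmul _ _ 1 fun i _ => le_of_eq (totalDegree_X i)) ?_
    simp
  · refine le_trans (MvPolynomial.totalDegree_finset_prod _ _) ?_
    refine le_trans (Finset.sum_le_card_nsmul _ _ 1 fun j _ => ?_) (by simp)
    have h : (1 - X j : PM n) = X j + 1 := by
      rw [sub_eq_add_neg, CharTwo.neg_eq, add_comm]
    rw [h]
    refine le_trans (totalDegree_add _ _) ?_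
    simp [totalDegree_X]

lemma totalDegree_expr {n : ℕ} (σ τ : Finset (Fin n)) :
    ((∏ i ∈ σ, X i) * ∏ j ∈ τ, (1 - X j) : PM n).totalDegree = σ.card + τ.card := by
  refine le_antisymm (totalDegree_expr_le σ τ) ?_
  rw [← phi_expr_natDegree σ τ]
  exact natDegree_phi_le _

lemma dvd_expr_lt {n : ℕ} {σ τ σ' τ' : Finset (Fin n)} (hd : Disjoint σ τ)
    (hdvd : ((∏ i ∈ σ', X i) * ∏ j ∈ τ', (1 - X j) : PM n) ∣
      (∏ i ∈ σ, X i) * ∏ j ∈ τ, (1 - X j))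
    (hne : ((∏ i ∈ σ', X i) * ∏ j ∈ τ', (1 - X j) : PM n) ≠
      (∏ i ∈ σ, X i) * ∏ j ∈ τ, (1 - X j)) :
    σ'.card + τ'.card < σ.card + τ.card := by
  obtain ⟨h, hfe⟩ := hdvd
  have hφ : phi ((∏ i ∈ σ, X i) * ∏ j ∈ τ, (1 - X j)) =
      phi ((∏ i ∈ σ', X i) * ∏ j ∈ τ', (1 - X j)) * phi h := by
    rw [hfe]; exact map_mul _ _ _
  have hφh : phi h ≠ 0 := by
    intro h0
    rw [h0, mul_zero] at hφ
    exact phi_expr_ne_zero σ τ hφ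
  have hdeg : σ.card + τ.card = (σ'.card + τ'.card) + (phi h).natDegree := by
    rw [← phi_expr_natDegree σ τ, ← phi_expr_natDegree σ' τ', hφ,
      Polynomial.natDegree_mul (phi_expr_ne_zero σ' τ') hφh]
  rcases Nat.eq_zero_or_pos (phi h).natDegree with h0 | hpos
  · exfalso
    -- equal degrees case: show the representations coincide
    have heval : ∀ c : Finset (Fin n), (σ ⊆ c ∧ ∀ j ∈ τ, j ∉ c) →
        (σ' ⊆ c ∧ ∀ j ∈ τ', j ∉ c) := by
      intro c hc
      have h1 : evalAt c ((∏ i ∈ σ, X i) * ∏ j ∈ τ, (1 - X j)) = 1 := by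
        rw [evalAt_expr, if_pos hc]
      have h2 : evalAt c ((∏ i ∈ σ, X i) * ∏ j ∈ τ, (1 - X j)) =
          evalAt c ((∏ i ∈ σ', X i) * ∏ j ∈ τ', (1 - X j)) * evalAt c h := by
        rw [hfe]; exact map_mul (MvPolynomial.eval _) _ _
      have h3 : evalAt c ((∏ i ∈ σ', X i) * ∏ j ∈ τ', (1 - X j)) ≠ 0 := by
        intro h4
        rw [h1, h4, zero_mul] at h2
        exact one_ne_zero h2
      rw [evalAt_expr] at h3
      by_contra hcon
      rw [if_neg hcon] at h3
      exact h3 rfl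
    have hbase := heval σ ⟨Finset.Subset.refl _, fun j hj => Finset.disjoint_right.mp hd hj⟩
    have hτ' : τ' ⊆ τ := by
      intro j hj
      by_contra hjτ
      have hc := heval (insert j σ) ⟨Finset.subset_insert _ _, fun k hk hkc => by
        rcases Finset.mem_insert.mp hkc with rfl | hkσ
        · exact hjτ hk
        · exact Finset.disjoint_right.mp hd hk hkσ⟩
      exact hc.2 j hj (Finset.mem_insert_self j σ)
    have hcards : σ'.card ≤ σ.card := Finset.card_le_card hbase.1
    have hcardt : τ'.card ≤ τ.card := Finset.card_le_card hτ'
    have hσ'' : σ' = σ := Finset.eq_of_subset_of_card_le hbase.1 (by omega)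
    have hτ'' : τ' = τ := Finset.eq_of_subset_of_card_le hτ' (by omega)
    rw [hσ'', hτ''] at hne
    exact hne rfl
  · omega

lemma sigma_nonempty_of_mem {n : ℕ} {C : Set (Finset (Fin n))} (hg : GoodCode C)
    {σ τ : Finset (Fin n)}
    (hm : ((∏ i ∈ σ, X i) * ∏ j ∈ τ, (1 - X j) : PM n) ∈ neuralIdeal C) : σ.Nonempty := by
  rcases Finset.eq_empty_or_nonempty σ with rfl | h
  · exfalso
    have := vanish_of_mem hm hg.1
    rw [evalAt_expr, if_pos ⟨Finset.empty_subset _, fun j _ hj => (Finset.notMem_empty j) hj⟩]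
      at this
    exact one_ne_zero this
  · exact h

lemma two_le_of_mem {n : ℕ} {C : Set (Finset (Fin n))} (hg : GoodCode C)
    {σ τ : Finset (Fin n)} (hd : Disjoint σ τ)
    (hm : ((∏ i ∈ σ, X i) * ∏ j ∈ τ, (1 - X j) : PM n) ∈ neuralIdeal C) :
    2 ≤ σ.card + τ.card := by
  have hσ := sigma_nonempty_of_mem hg hm
  by_contra hlt
  push_neg at hlt
  have hσ1 : σ.card = 1 := by
    have := Finset.card_pos.mpr hσ
    omega
  have hτ0 : τ = ∅ := by
    have : τ.card = 0 := by omega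
    exact Finset.card_eq_zero.mp this
  obtain ⟨a, ha⟩ := Finset.card_eq_one.mp hσ1
  obtain ⟨c, hc, hac⟩ := hg.2.1 a
  have := vanish_of_mem hm hc
  rw [evalAt_expr, if_pos ⟨by simp [ha, hac], by simp [hτ0]⟩] at this
  exact one_ne_zero this

lemma cf_of_deg2 {n : ℕ} {C : Set (Finset (Fin n))} (hg : GoodCode C)
    {σ τ : Finset (Fin n)} (hd : Disjoint σ τ) (h2 : σ.card + τ.card = 2)
    (hm : ((∏ i ∈ σ, X i) * ∏ j ∈ τ, (1 - X j) : PM n) ∈ neuralIdeal C) :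
    ((∏ i ∈ σ, X i) * ∏ j ∈ τ, (1 - X j) : PM n) ∈ CF C := by
  refine ⟨⟨σ, τ, hd, rfl⟩, hm, ?_⟩
  rintro g ⟨σ', τ', hd', rfl⟩ hg' hdvd
  by_contra hne
  have := dvd_expr_lt hd hdvd hne
  have := two_le_of_mem hg hd' hg'
  omega

lemma exists_cf_dvd {n : ℕ} {C : Set (Finset (Fin n))}
    {σ τ : Finset (Fin n)} (hd : Disjoint σ τ)
    (hm : ((∏ i ∈ σ, X i) * ∏ j ∈ τ, (1 - X j) : PM n) ∈ neuralIdeal C) :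
    ∃ g ∈ CF C, g ∣ (∏ i ∈ σ, X i) * ∏ j ∈ τ, (1 - X j) := by
  classical
  obtain ⟨d, hdle⟩ : ∃ d, σ.card + τ.card ≤ d := ⟨_, le_rfl⟩
  induction d generalizing σ τ with
  | zero =>
    by_cases hmin : ∀ g, IsPseudoMonomial g → g ∈ neuralIdeal C →
        g ∣ (∏ i ∈ σ, X i) * ∏ j ∈ τ, (1 - X j) →
        g = (∏ i ∈ σ, X i) * ∏ j ∈ τ, (1 - X j)
    · exact ⟨_, ⟨⟨σ, τ, hd, rfl⟩, hm, hmin⟩, dvd_refl _⟩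
    · push_neg at hmin
      obtain ⟨g, ⟨σ', τ', hd', rfl⟩, hgJ, hgdvd, hgne⟩ := hmin
      have := dvd_expr_lt hd hgdvd hgne
      omega
  | succ d ih =>
    by_cases hmin : ∀ g, IsPseudoMonomial g → g ∈ neuralIdeal C →
        g ∣ (∏ i ∈ σ, X i) * ∏ j ∈ τ, (1 - X j) →
        g = (∏ i ∈ σ, X i) * ∏ j ∈ τ, (1 - X j)
    · exact ⟨_, ⟨⟨σ, τ, hd, rfl⟩, hm, hmin⟩, dvd_refl _⟩
    · push_neg at hmin
      obtain ⟨g, ⟨σ', τ', hd', rfl⟩, hgJ, hgdvd, hgne⟩ := hmin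
      have hlt := dvd_expr_lt hd hgdvd hgne
      obtain ⟨g', hg', hg'dvd⟩ := ih hd' hgJ (by omega)
      exact ⟨g', hg', dvd_trans hg'dvd hgdvd⟩

lemma evalAt_congr_of_not_mem_vars {n : ℕ} {f : PM n} {a : Fin n} (ha : a ∉ f.vars)
    {c c' : Finset (Fin n)} (hcc : ∀ j, j ≠ a → (j ∈ c ↔ j ∈ c')) :
    evalAt c f = evalAt c' f := by
  have h := MvPolynomial.eval₂Hom_congr' (f₁ := RingHom.id (ZMod 2)) (f₂ := RingHom.id (ZMod 2))
    (g₁ := fun i => if i ∈ c then 1 else 0) (g₂ := fun i => if i ∈ c' then 1 else 0)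
    (p₁ := f) (p₂ := f) rfl ?_ rfl
  · exact h
  · intro i hi _
    have hia : i ≠ a := fun h => ha (h ▸ hi)
    simp only [hcc i hia]

lemma vars_expr {n : ℕ} {σ τ : Finset (Fin n)} (hd : Disjoint σ τ) :
    ((∏ i ∈ σ, X i) * ∏ j ∈ τ, (1 - X j) : PM n).vars = σ ∪ τ := by
  classical
  apply Finset.Subset.antisymm
  · refine le_trans (vars_mul _ _) ?_
    apply Finset.union_subset
    · refine le_trans (vars_prod _) ?_
      intro x hx
      rw [Finset.mem_biUnion] at hx
      obtain ⟨i, hi, hxi⟩ := hx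
      rw [vars_X] at hxi
      rw [Finset.mem_singleton] at hxi
      exact Finset.mem_union_left _ (hxi ▸ hi)
    · refine le_trans (vars_prod _) ?_
      intro x hx
      rw [Finset.mem_biUnion] at hx
      obtain ⟨j, hj, hxj⟩ := hx
      have : (1 - X j : PM n).vars ⊆ {j} := by
        have he : (1 - X j : PM n) = X j + 1 := by
          rw [sub_eq_add_neg, CharTwo.neg_eq, add_comm]
        rw [he]
        refine le_trans (vars_add_subset _ _) ?_
        rw [vars_X (R := ZMod 2), vars_one]
        simp
      have := this hxj
      rw [Finset.mem_singleton] at this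
      exact Finset.mem_union_right _ (this ▸ hj)
  · intro i hi
    by_contra hvars
    have h1 : evalAt σ ((∏ i ∈ σ, X i) * ∏ j ∈ τ, (1 - X j)) = 1 := by
      rw [evalAt_expr, if_pos ⟨Finset.Subset.refl _, fun j hj => Finset.disjoint_right.mp hd hj⟩]
    rcases Finset.mem_union.mp hi with hiσ | hiτ
    · have h2 : evalAt (σ.erase i) ((∏ i ∈ σ, X i) * ∏ j ∈ τ, (1 - X j)) = 0 := by
        rw [evalAt_expr, if_neg]
        rintro ⟨hsub, -⟩
        exact (Finset.notMem_erase i σ) (hsub hiσ)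
      rw [evalAt_congr_of_not_mem_vars hvars
        (c' := σ.erase i) (fun j hj => by simp [Finset.mem_erase, hj]), h2] at h1
      exact absurd h1 (by decide)
    · have h2 : evalAt (insert i σ) ((∏ i ∈ σ, X i) * ∏ j ∈ τ, (1 - X j)) = 0 := by
        rw [evalAt_expr, if_neg]
        rintro ⟨-, hdis⟩
        exact hdis i hiτ (Finset.mem_insert_self i σ)
      rw [evalAt_congr_of_not_mem_vars hvars
        (c' := insert i σ) (fun j hj => by simp [Finset.mem_insert, hj]), h2] at h1
      exact absurd h1 (by decide)

def NoCofire {n : ℕ} (C : Set (Finset (Fin n))) (a b : Fin n) : Prop :=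
  ∀ c ∈ C, ¬(a ∈ c ∧ b ∈ c)

def SubU {n : ℕ} (C : Set (Finset (Fin n))) (a b : Fin n) : Prop :=
  ∀ c ∈ C, a ∈ c → b ∈ c

lemma expr_pair {n : ℕ} {a b : Fin n} (hab : a ≠ b) :
    ((∏ i ∈ ({a, b} : Finset (Fin n)), X i) * ∏ j ∈ (∅ : Finset (Fin n)), (1 - X j) : PM n)
      = X a * X b := by
  rw [Finset.prod_pair hab, Finset.prod_empty, mul_one]

lemma expr_single {n : ℕ} (a b : Fin n) :
    ((∏ i ∈ ({a} : Finset (Fin n)), X i) * ∏ j ∈ ({b} : Finset (Fin n)), (1 - X j) : PM n)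
      = X a * (1 - X b) := by
  rw [Finset.prod_singleton, Finset.prod_singleton]

lemma mem_XX_iff {n : ℕ} {C : Set (Finset (Fin n))} {a b : Fin n} (hab : a ≠ b) :
    (X a * X b : PM n) ∈ neuralIdeal C ↔ NoCofire C a b := by
  constructor
  · intro hm c hc hcon
    have := vanish_of_mem hm hc
    rw [← expr_pair hab, evalAt_expr, if_pos] at this
    · exact absurd this (by decide)
    · refine ⟨fun x hx => ?_, fun j hj => absurd hj (Finset.notMem_empty j)⟩
      rcases Finset.mem_insert.mp hx with rfl | hx
      · exact hcon.1
      · exact (Finset.mem_singleton.mp hx) ▸ hcon.2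
  · intro hno
    rw [← expr_pair hab]
    apply mem_of_vanish (by simp)
    rintro c hc ⟨hsub, -⟩
    exact hno c hc ⟨hsub (Finset.mem_insert_self a _), hsub (by simp)⟩

lemma mem_X1X_iff {n : ℕ} {C : Set (Finset (Fin n))} {a b : Fin n} (hab : a ≠ b) :
    (X a * (1 - X b) : PM n) ∈ neuralIdeal C ↔ SubU C a b := by
  constructor
  · intro hm c hc hac
    by_contra hbc
    have := vanish_of_mem hm hc
    rw [← expr_single a b, evalAt_expr, if_pos] at this
    · exact absurd this (by decide)
    · exact ⟨by simpa using hac, by simpa using hbc⟩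
  · intro hsu
    rw [← expr_single a b]
    apply mem_of_vanish (by simp [Finset.disjoint_singleton, hab.symm, hab])
    rintro c hc ⟨hsub, hdis⟩
    exact hdis b (Finset.mem_singleton_self b) (hsu c hc (hsub (Finset.mem_singleton_self a)))

lemma cf_XX {n : ℕ} {C : Set (Finset (Fin n))} (hg : GoodCode C) {a b : Fin n} (hab : a ≠ b)
    (hno : NoCofire C a b) : (X a * X b : PM n) ∈ CF C := by
  rw [← expr_pair hab]
  apply cf_of_deg2 hg (by simp) (by rw [Finset.card_pair hab, Finset.card_empty])
  rw [expr_pair hab]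
  exact (mem_XX_iff hab).mpr hno

lemma cf_X1X {n : ℕ} {C : Set (Finset (Fin n))} (hg : GoodCode C) {a b : Fin n} (hab : a ≠ b)
    (hsu : SubU C a b) : (X a * (1 - X b) : PM n) ∈ CF C := by
  rw [← expr_single a b]
  apply cf_of_deg2 hg (by simp [Finset.disjoint_singleton, hab.symm, hab])
    (by rw [Finset.card_singleton, Finset.card_singleton])
  rw [expr_single a b]
  exact (mem_X1X_iff hab).mpr hsu

lemma vars_XX {n : ℕ} {a b : Fin n} (hab : a ≠ b) :
    (X a * X b : PM n).vars = {a, b} := by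
  rw [← expr_pair hab, vars_expr (by simp), Finset.union_empty]

lemma vars_X1X {n : ℕ} {a b : Fin n} (hab : a ≠ b) :
    (X a * (1 - X b) : PM n).vars = {a, b} := by
  rw [← expr_single a b, vars_expr (by simp [Finset.disjoint_singleton, hab.symm, hab])]
  ext x; simp [Finset.mem_insert]

lemma cf_shape {n : ℕ} {C : Set (Finset (Fin n))} (hg : GoodCode C) (hdeg : DegreeTwo C)
    {f : PM n} (hf : f ∈ CF C) :
    (∃ a b, a ≠ b ∧ f = X a * X b ∧ NoCofire C a b) ∨
      (∃ a b, a ≠ b ∧ f = X a * (1 - X b) ∧ SubU C a b) := by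
  obtain ⟨⟨σ, τ, hd, rfl⟩, hJ, hmin⟩ := hf
  have hcard : σ.card + τ.card = 2 := by
    rw [← totalDegree_expr σ τ]
    exact hdeg _ ⟨⟨σ, τ, hd, rfl⟩, hJ, hmin⟩
  have hσ := sigma_nonempty_of_mem hg hJ
  have hσpos : 1 ≤ σ.card := Finset.card_pos.mpr hσ
  rcases Nat.lt_or_ge σ.card 2 with hσ1 | hσ2
  · -- σ.card = 1, τ.card = 1
    have hs1 : σ.card = 1 := by omega
    have ht1 : τ.card = 1 := by omega
    obtain ⟨a, rfl⟩ := Finset.card_eq_one.mp hs1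
    obtain ⟨b, rfl⟩ := Finset.card_eq_one.mp ht1
    have hab : a ≠ b := by
      intro h
      exact (Finset.disjoint_left.mp hd (Finset.mem_singleton_self a))
        (h ▸ Finset.mem_singleton_self a)
    right
    refine ⟨a, b, hab, expr_single a b, ?_⟩
    rw [← mem_X1X_iff hab, ← expr_single a b]
    exact hJ
  · have hs2 : σ.card = 2 := by omega
    have ht0 : τ = ∅ := Finset.card_eq_zero.mp (by omega)
    obtain ⟨a, b, hab, rfl⟩ := Finset.card_eq_two.mp hs2
    subst ht0
    left
    refine ⟨a, b, hab, expr_pair hab, ?_⟩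
    rw [← mem_XX_iff hab, ← expr_pair hab]
    exact hJ

lemma pair_eq_cases {n : ℕ} {a b i j : Fin n} (hab : a ≠ b)
    (h : ({a, b} : Finset (Fin n)) = {i, j}) : (a = i ∧ b = j) ∨ (a = j ∧ b = i) := by
  have ha : a ∈ ({i, j} : Finset (Fin n)) := h ▸ Finset.mem_insert_self a {b}
  have hb : b ∈ ({i, j} : Finset (Fin n)) := h ▸ Finset.mem_insert_of_mem
    (Finset.mem_singleton_self b)
  simp only [Finset.mem_insert, Finset.mem_singleton] at ha hb
  rcases ha with rfl | rfl
  · rcases hb with rfl | rfl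
    · exact absurd rfl hab
    · exact Or.inl ⟨rfl, rfl⟩
  · rcases hb with rfl | rfl
    · exact Or.inr ⟨rfl, rfl⟩
    · exact absurd rfl hab

lemma adj_iff {n : ℕ} {C : Set (Finset (Fin n))} (hg : GoodCode C) (hdeg : DegreeTwo C)
    {i j : Fin n} :
    (GRel C).Adj i j ↔ i ≠ j ∧ (∃ c ∈ C, i ∈ c ∧ j ∈ c) ∧ ¬SubU C i j ∧ ¬SubU C j i := by
  show (i ≠ j ∧ ∀ f ∈ CF C, f.vars ≠ {i, j}) ↔ _
  constructor
  · rintro ⟨hne, hvars⟩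
    refine ⟨hne, ?_, ?_, ?_⟩
    · by_contra hno
      push_neg at hno
      have hnc : NoCofire C i j := fun c hc hcon => by
        have := hno c hc hcon.1
        exact this hcon.2
      exact hvars _ (cf_XX hg hne hnc) (vars_XX hne)
    · intro hsu
      exact hvars _ (cf_X1X hg hne hsu) (vars_X1X hne)
    · intro hsu
      refine hvars _ (cf_X1X hg hne.symm hsu) ?_
      rw [vars_X1X hne.symm, Finset.pair_comm]
  · rintro ⟨hne, ⟨c, hc, hic, hjc⟩, hnsu1, hnsu2⟩
    refine ⟨hne, fun f hf hv => ?_⟩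
    rcases cf_shape hg hdeg hf with ⟨a, b, hab, rfl, hno⟩ | ⟨a, b, hab, rfl, hsu⟩
    · rw [vars_XX hab] at hv
      rcases pair_eq_cases hab hv with ⟨rfl, rfl⟩ | ⟨rfl, rfl⟩
      · exact hno c hc ⟨hic, hjc⟩
      · exact hno c hc ⟨hjc, hic⟩
    · rw [vars_X1X hab] at hv
      rcases pair_eq_cases hab hv with ⟨rfl, rfl⟩ | ⟨rfl, rfl⟩
      · exact hnsu1 hsu
      · exact hnsu2 hsu

lemma plt_iff {n : ℕ} {C : Set (Finset (Fin n))} (hg : GoodCode C) {i j : Fin n} :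
    PLt C j i ↔ j ≠ i ∧ SubU C j i := by
  constructor
  · intro hp
    obtain ⟨⟨σ, τ, hd, hrep⟩, hJ, -⟩ := hp
    have hji : j ≠ i := by
      rintro rfl
      have h1 : evalAt σ ((∏ i ∈ σ, X i) * ∏ j ∈ τ, (1 - X j)) = 1 := by
        rw [evalAt_expr, if_pos ⟨Finset.Subset.refl _,
          fun k hk => Finset.disjoint_right.mp hd hk⟩]
      rw [← hrep] at h1
      have h2 : evalAt σ (X j * (1 - X j)) = 0 := by
        unfold evalAt
        rw [map_mul, map_sub, map_one, eval_X]
        split_ifs <;> decide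
      rw [h2] at h1
      exact absurd h1 (by decide)
    exact ⟨hji, (mem_X1X_iff hji).mp hJ⟩
  · rintro ⟨hji, hsu⟩
    exact cf_X1X hg hji hsu

lemma forbidden_of_not_mem {n : ℕ} {C : Set (Finset (Fin n))} (hg : GoodCode C)
    (hdeg : DegreeTwo C) {γ : Finset (Fin n)} (hγ : γ ∉ C) :
    (∃ a b, a ≠ b ∧ a ∈ γ ∧ b ∈ γ ∧ NoCofire C a b) ∨
      (∃ a b, a ≠ b ∧ a ∈ γ ∧ b ∉ γ ∧ SubU C a b) := by
  have hJ : rho γ ∈ neuralIdeal C := Ideal.subset_span ⟨γ, hγ, rfl⟩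
  rw [rho] at hJ
  obtain ⟨g, hgCF, hgdvd⟩ := exists_cf_dvd (disjoint_compl_right) hJ
  have hval : evalAt γ g ≠ 0 := by
    obtain ⟨h, hfe⟩ := hgdvd
    have h1 : evalAt γ ((∏ i ∈ γ, X i) * ∏ j ∈ γᶜ, (1 - X j)) = 1 := by
      have := evalAt_rho γ γ
      rw [rho] at this
      rw [this, if_pos rfl]
    have h2 : evalAt γ ((∏ i ∈ γ, X i) * ∏ j ∈ γᶜ, (1 - X j)) = evalAt γ g * evalAt γ h := by
      rw [hfe]; exact map_mul (MvPolynomial.eval _) _ _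
    intro h0
    rw [h1, h0, zero_mul] at h2
    exact one_ne_zero h2
  rcases cf_shape hg hdeg hgCF with ⟨a, b, hab, rfl, hno⟩ | ⟨a, b, hab, rfl, hsu⟩
  · left
    refine ⟨a, b, hab, ?_, ?_, hno⟩ <;>
    · rw [← expr_pair hab, evalAt_expr] at hval
      by_contra hmem
      rw [if_neg] at hval
      · exact hval rfl
      · rintro ⟨hsub, -⟩
        first
        | exact hmem (hsub (Finset.mem_insert_self a {b}))
        | exact hmem (hsub (Finset.mem_insert_of_mem (Finset.mem_singleton_self b)))
  · right
    rw [← expr_single a b, evalAt_expr] at hval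
    have hcond : ({a} : Finset (Fin n)) ⊆ γ ∧ ∀ k ∈ ({b} : Finset (Fin n)), k ∉ γ := by
      by_contra hcon
      rw [if_neg hcon] at hval
      exact hval rfl
    exact ⟨a, b, hab, hcond.1 (Finset.mem_singleton_self a),
      hcond.2 b (Finset.mem_singleton_self b), hsu⟩

/-- `i` is a `k`-piercing iff `i` is an elimination neuron
(simplicial in `G(C)` and minimal in `P(C)`) with exactly `k` neighbors. -/
theorem piercing_iff_elimination {n : ℕ} (C : Set (Finset (Fin n)))
    (hgood : GoodCode C) (hdeg : DegreeTwo C) (i : Fin n) (k : ℕ) :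
    IsPiercing C i k ↔
      IsSimplicial (GRel C) i ∧ (∀ j, ¬ PLt C j i) ∧
        ((GRel C).neighborSet i).ncard = k := by
  constructor
  · rintro ⟨σ, τ, hστ, hiτ, hcard, hIcc, hC⟩
    have hiσ : i ∉ σ := fun h => hiτ (hστ h)
    have hsup : del C i ∪ Icc' (insert i σ) (insert i τ) ⊆ C := le_of_eq hC.symm
    have hdelC : del C i ⊆ C := fun c hc => hsup (Or.inl hc)
    have hF1 : ∀ γ, insert i σ ⊆ γ → γ ⊆ insert i τ → γ ∈ C :=
      fun γ h1 h2 => hsup (Or.inr ⟨h1, h2⟩)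
    have hF2 : ∀ c ∈ C, i ∈ c → insert i σ ⊆ c ∧ c ⊆ insert i τ := by
      intro c hc hic
      have hc' : c ∈ del C i ∪ Icc' (insert i σ) (insert i τ) := by rw [← hC]; exact hc
      rcases hc' with h | h
      · obtain ⟨d, _, rfl⟩ := h
        exact absurd hic (Finset.notMem_erase i d)
      · exact h
    have hF3 : Icc' σ τ ⊆ C := fun γ hγ => hdelC (hIcc hγ)
    have hnb : ∀ j, (GRel C).Adj i j ↔ j ∈ τ \ σ := by
      intro j
      rw [adj_iff hgood hdeg, Finset.mem_sdiff]
      constructor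
      · rintro ⟨hne, ⟨c, hc, hic, hjc⟩, hnsu1, _⟩
        constructor
        · have h2 := (hF2 c hc hic).2 hjc
          rcases Finset.mem_insert.mp h2 with rfl | h
          · exact absurd rfl hne
          · exact h
        · intro hjσ
          exact hnsu1 fun c' hc' hic' =>
            (hF2 c' hc' hic').1 (Finset.mem_insert_of_mem hjσ)
      · rintro ⟨hjτ, hjσ⟩
        have hne : i ≠ j := fun h => hiτ (h ▸ hjτ)
        have hc1 : insert i (insert j σ) ∈ C := by
          apply hF1
          · exact Finset.insert_subset_insert i (Finset.subset_insert j σ)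
          · intro x hx
            rcases Finset.mem_insert.mp hx with rfl | hx
            · exact Finset.mem_insert_self x _
            · rcases Finset.mem_insert.mp hx with rfl | hx
              · exact Finset.mem_insert_of_mem hjτ
              · exact Finset.mem_insert_of_mem (hστ hx)
        have hc2 : insert i σ ∈ C := by
          exact hF1 _ (Finset.Subset.refl _) (Finset.insert_subset_insert i hστ)
        have hc3 : insert j σ ∈ C := by
          apply hF3
          exact ⟨Finset.subset_insert j σ, Finset.insert_subset hjτ hστ⟩
        refine ⟨hne, ⟨insert i (insert j σ), hc1, Finset.mem_insert_self i _,
          Finset.mem_insert_of_mem (Finset.mem_insert_self j σ)⟩, ?_, ?_⟩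
        · intro hsu
          have := hsu _ hc2 (Finset.mem_insert_self i σ)
          rcases Finset.mem_insert.mp this with rfl | h
          · exact hne rfl
          · exact hjσ h
        · intro hsu
          have := hsu _ hc3 (Finset.mem_insert_self j σ)
          rcases Finset.mem_insert.mp this with rfl | h
          · exact hne rfl
          · exact hiσ h
    refine ⟨?_, ?_, ?_⟩
    · intro a ha b hb hab
      rw [SimpleGraph.mem_neighborSet, hnb a, Finset.mem_sdiff] at ha
      rw [SimpleGraph.mem_neighborSet, hnb b, Finset.mem_sdiff] at hb
      rw [adj_iff hgood hdeg]
      have hca : insert a σ ∈ C := hF3 ⟨Finset.subset_insert _ _,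
        Finset.insert_subset ha.1 hστ⟩
      have hcb : insert b σ ∈ C := hF3 ⟨Finset.subset_insert _ _,
        Finset.insert_subset hb.1 hστ⟩
      have hcab : insert a (insert b σ) ∈ C := hF3 ⟨
        (Finset.subset_insert _ _).trans (Finset.subset_insert _ _),
        Finset.insert_subset ha.1 (Finset.insert_subset hb.1 hστ)⟩
      refine ⟨hab, ⟨insert a (insert b σ), hcab, Finset.mem_insert_self a _,
        Finset.mem_insert_of_mem (Finset.mem_insert_self b σ)⟩, ?_, ?_⟩
      · intro hsu
        have := hsu _ hca (Finset.mem_insert_self a σ)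
        rcases Finset.mem_insert.mp this with rfl | h
        · exact hab rfl
        · exact hb.2 h
      · intro hsu
        have := hsu _ hcb (Finset.mem_insert_self b σ)
        rcases Finset.mem_insert.mp this with rfl | h
        · exact hab rfl
        · exact ha.2 h
    · intro j hplt
      rw [plt_iff hgood] at hplt
      obtain ⟨hji, hsu⟩ := hplt
      obtain ⟨c, hc, hjc⟩ := hgood.2.1 j
      have hic := hsu c hc hjc
      have hcer : c.erase i ∈ C := hdelC ⟨c, hc, rfl⟩
      have hj' : j ∈ c.erase i := Finset.mem_erase.mpr ⟨hji, hjc⟩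
      exact (Finset.notMem_erase i c) (hsu _ hcer hj')
    · have : (GRel C).neighborSet i = ↑(τ \ σ) := Set.ext fun j => by
        rw [SimpleGraph.mem_neighborSet, hnb j, Finset.coe_sdiff]
        simp
      rw [this, Set.ncard_coe_finset, hcard]
  · rintro ⟨hsimp, hmin, hncard⟩
    classical
    set σ : Finset (Fin n) := Finset.univ.filter (fun j => j ≠ i ∧ SubU C i j) with hσdef
    set N : Finset (Fin n) := Finset.univ.filter (fun j => (GRel C).Adj i j) with hNdef
    set τ : Finset (Fin n) := σ ∪ N with hτdef
    have hmem_σ : ∀ j, j ∈ σ ↔ (j ≠ i ∧ SubU C i j) := fun j => by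
      rw [hσdef, Finset.mem_filter]; simp
    have hmem_N : ∀ j, j ∈ N ↔ (GRel C).Adj i j := fun j => by
      rw [hNdef, Finset.mem_filter]; simp
    have hnosub : ∀ j, j ≠ i → ¬SubU C j i := fun j hji hsu =>
      hmin j ((plt_iff hgood).mpr ⟨hji, hsu⟩)
    have htri : ∀ j, j ≠ i → (GRel C).Adj i j ∨ SubU C i j ∨ NoCofire C i j := by
      intro j hji
      by_cases hadj : (GRel C).Adj i j
      · exact Or.inl hadj
      · right
        rw [adj_iff hgood hdeg] at hadj
        push_neg at hadj
        by_cases hsu : SubU C i j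
        · exact Or.inl hsu
        · by_cases hco : ∃ c ∈ C, i ∈ c ∧ j ∈ c
          · exact absurd (hadj hji.symm hco hsu) (hnosub j hji)
          · push_neg at hco
            exact Or.inr fun c hc hcon => hco c hc hcon.1 hcon.2
    have hadj_N : ∀ j ∈ N, (GRel C).Adj i j := fun j hj => (hmem_N j).mp hj
    have hσN : ∀ j, j ∈ σ → j ∉ N := by
      intro j hjσ hjN
      have h1 := ((hmem_σ j).mp hjσ).2
      have h2 := (adj_iff hgood hdeg).mp ((hmem_N j).mp hjN)
      exact h2.2.2.1 h1
    have hiτ : i ∉ τ := by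
      rw [hτdef, Finset.mem_union]
      rintro (h | h)
      · exact ((hmem_σ i).mp h).1 rfl
      · exact (GRel C).loopless.irrefl i ((hmem_N i).mp h)
    -- any two elements of insert i τ cofire
    have hcofire : ∀ x y, x ∈ insert i τ → y ∈ insert i τ → x ≠ y →
        ∃ c ∈ C, x ∈ c ∧ y ∈ c := by
      have key : ∀ y ∈ τ, ∃ c ∈ C, i ∈ c ∧ y ∈ c := by
        intro y hy
        rcases Finset.mem_union.mp hy with h | h
        · obtain ⟨c, hc, hic⟩ := hgood.2.1 i
          exact ⟨c, hc, hic, ((hmem_σ y).mp h).2 c hc hic⟩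
        · obtain ⟨-, hco, -, -⟩ := (adj_iff hgood hdeg).mp ((hmem_N y).mp h)
          exact hco
      intro x y hx hy hxy
      rcases Finset.mem_insert.mp hx with rfl | hxτ
      · rcases Finset.mem_insert.mp hy with rfl | hyτ
        · exact absurd rfl hxy
        · exact key y hyτ
      · rcases Finset.mem_insert.mp hy with rfl | hyτ
        · obtain ⟨c, hc, h1, h2⟩ := key x hxτ
          exact ⟨c, hc, h2, h1⟩
        · rcases Finset.mem_union.mp hxτ with hxσ | hxN
          · obtain ⟨c, hc, hic, hyc⟩ := key y hyτ
            exact ⟨c, hc, ((hmem_σ x).mp hxσ).2 c hc hic, hyc⟩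
          · rcases Finset.mem_union.mp hyτ with hyσ | hyN
            · obtain ⟨c, hc, hic, hxc⟩ := key x hxτ
              exact ⟨c, hc, hxc, ((hmem_σ y).mp hyσ).2 c hc hic⟩
            · have hadj := hsimp ((GRel C).mem_neighborSet i x |>.mpr (hadj_N x hxN))
                ((GRel C).mem_neighborSet i y |>.mpr (hadj_N y hyN)) hxy
              obtain ⟨-, hco, -, -⟩ := (adj_iff hgood hdeg).mp hadj
              exact hco
    -- Step: everything between σ and insert i τ is a codeword
    have hstep : ∀ γ : Finset (Fin n), σ ⊆ γ → γ ⊆ insert i τ → γ ∈ C := by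
      intro γ hσγ hγτ
      by_contra hγ
      rcases forbidden_of_not_mem hgood hdeg hγ with
        ⟨a, b, hab, haγ, hbγ, hno⟩ | ⟨a, b, hab, haγ, hbγ, hsu⟩
      · obtain ⟨c, hc, hac, hbc⟩ := hcofire a b (hγτ haγ) (hγτ hbγ) hab
        exact hno c hc ⟨hac, hbc⟩
      · -- a ∈ γ, b ∉ γ, SubU C a b
        by_cases hbi : b = i
        · exact hnosub a (fun h => hab (h.trans hbi.symm)) (hbi ▸ hsu)
        · have hbσ : b ∉ σ := fun h => hbγ (hσγ h)
          have hnsub_ib : ¬SubU C i b := by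
            intro h
            exact hbσ ((hmem_σ b).mpr ⟨hbi, h⟩)
          rcases Finset.mem_insert.mp (hγτ haγ) with rfl | haτ
          · exact hnsub_ib hsu
          · rcases Finset.mem_union.mp haτ with haσ | haN
            · exact hnsub_ib fun c hc hic => hsu c hc (((hmem_σ a).mp haσ).2 c hc hic)
            · rcases htri b hbi with hadjb | hsub | hnob
              · have hadjab := hsimp ((GRel C).mem_neighborSet i a |>.mpr (hadj_N a haN))
                  ((GRel C).mem_neighborSet i b |>.mpr hadjb) hab
                exact ((adj_iff hgood hdeg).mp hadjab).2.2.1 hsu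
              · exact hnsub_ib hsub
              · obtain ⟨-, ⟨c, hc, hic, hac⟩, -, -⟩ :=
                  (adj_iff hgood hdeg).mp (hadj_N a haN)
                exact hnob c hc ⟨hic, hsu c hc hac⟩
    have hsubd : ∀ c ∈ C, i ∈ c → σ ⊆ c ∧ c ⊆ insert i τ := by
      intro c hc hic
      constructor
      · intro x hxσ
        exact ((hmem_σ x).mp hxσ).2 c hc hic
      · intro x hxc
        by_cases hxi : x = i
        · exact hxi ▸ Finset.mem_insert_self i τ
        · rcases htri x hxi with hadj | hsub | hno
          · exact Finset.mem_insert_of_mem (Finset.mem_union_right _ ((hmem_N x).mpr hadj))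
          · exact Finset.mem_insert_of_mem (Finset.mem_union_left _
              ((hmem_σ x).mpr ⟨hxi, hsub⟩))
          · exact absurd ⟨hic, hxc⟩ (hno c hc)
    refine ⟨σ, τ, Finset.subset_union_left, hiτ, ?_, ?_, ?_⟩
    · have hτσ : τ \ σ = N := by
        ext x
        rw [Finset.mem_sdiff, hτdef, Finset.mem_union]
        constructor
        · rintro ⟨h | h, hxσ⟩
          · exact absurd h hxσ
          · exact h
        · intro h
          refine ⟨Or.inr h, fun hx => hσN x hx h⟩
      rw [hτσ]
      have hns : (GRel C).neighborSet i = ↑N := Set.ext fun j => by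
        rw [SimpleGraph.mem_neighborSet, Finset.mem_coe, hmem_N j]
      rw [hns, Set.ncard_coe_finset] at hncard
      exact hncard
    · rintro γ ⟨h1, h2⟩
      have hγC : γ ∈ C := hstep γ h1 (h2.trans (Finset.subset_insert i τ))
      have hiγ : i ∉ γ := fun h => hiτ (h2 h)
      exact ⟨γ, hγC, Finset.erase_eq_of_notMem hiγ⟩
    · apply Set.eq_of_subset_of_subset
      · intro c hc
        by_cases hic : i ∈ c
        · right
          obtain ⟨h1, h2⟩ := hsubd c hc hic
          exact ⟨Finset.insert_subset hic h1, h2⟩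
        · exact Or.inl ⟨c, hc, Finset.erase_eq_of_notMem hic⟩
      · rintro c (⟨d, hd, rfl⟩ | ⟨h1, h2⟩)
        · by_cases hid : i ∈ d
          · obtain ⟨hσd, hdτ⟩ := hsubd d hd hid
            apply hstep
            · intro x hxσ
              exact Finset.mem_erase.mpr ⟨((hmem_σ x).mp hxσ).1, hσd hxσ⟩
            · exact (Finset.erase_subset i d).trans hdτ
          · show d.erase i ∈ C
            rw [Finset.erase_eq_of_notMem hid]
            exact hd
        · exact hstep c ((Finset.subset_insert i σ).trans h1) h2

end
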